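/- There is a constant C depending only on g, k, and the local dimension d with the following property. Let H be a k-local Hamiltonian with interaction strength g on the N-spin system, with ground energy 0, unique normalized ground state |Ω⟩, and spectral gap δE > 0. Then for every subset of spins L with δE ≤ g|L| and every spin i outside L, the two-spin reduced density matrices of |Ω⟩ satisfy ∑_{j∈L} ‖ρ_{ij} − ρ_i ⊗ ρ_j‖ ≤ C·√(|L|/δE). -/

import Mathlib

noncomputable section

open scoped ComplexConjugate

/-- The Hilbert space of `N` spins, each of local dimension `d`:
the `N`-fold tensor product `⊗ ℂ^d`, realized as the space with orthonormal
basis indexed by configurations `Fin N → Fin d`. -/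
abbrev SpinSpace (N d : ℕ) : Type := EuclideanSpace ℂ (Fin N → Fin d)

/-- Operators on the spin system. -/
abbrev SpinOp (N d : ℕ) : Type := SpinSpace N d →L[ℂ] SpinSpace N d

variable {N d : ℕ}

/-- The standard (computational) basis vector labelled by a configuration. -/
def basisVec (f : Fin N → Fin d) : SpinSpace N d := EuclideanSpace.single f 1

/-- The matrix entry `⟨f| A |g⟩` of an operator in the computational basis. -/
def matEntry (A : SpinOp N d) (f g : Fin N → Fin d) : ℂ :=
  inner ℂ (basisVec f) (A (basisVec g))

/-- `A` is supported on the subset `X` of spins: under the tensor factorization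
`ℋ ≅ ℋ_X ⊗ ℋ_{Xᶜ}` it has the form `o ⊗ I`.  Concretely: matrix entries vanish
unless the two configurations agree outside `X`, and entries depend only on the
restrictions of the configurations to `X`. -/
def SupportedOn (X : Finset (Fin N)) (A : SpinOp N d) : Prop :=
  (∀ f g : Fin N → Fin d, (∃ i, i ∉ X ∧ f i ≠ g i) → matEntry A f g = 0) ∧
  (∀ f g f' g' : Fin N → Fin d,
      (∀ i ∈ X, f i = f' i) → (∀ i ∈ X, g i = g' i) →
      (∀ i, i ∉ X → f i = g i) → (∀ i, i ∉ X → f' i = g' i) →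
      matEntry A f g = matEntry A f' g')

/-- A `q`-local operator: a sum of operators, each supported on at most `q` spins. -/
def IsLocalOp (q : ℕ) (A : SpinOp N d) : Prop :=
  ∃ (n : ℕ) (X : Fin n → Finset (Fin N)) (o : Fin n → SpinOp N d),
    (∀ t, (X t).card ≤ q ∧ SupportedOn (X t) (o t)) ∧ A = ∑ t, o t

/-- A `k`-local Hamiltonian with interaction strength `g`: a sum of Hermitian
terms, each supported on at most `k` spins, such that for every spin the total
norm of the terms acting on it is at most `g`. -/
def IsKLocalHamiltonian (k : ℕ) (g : ℝ) (H : SpinOp N d) : Prop :=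
  ∃ (n : ℕ) (X : Fin n → Finset (Fin N)) (h : Fin n → SpinOp N d),
    (∀ t, (X t).card ≤ k ∧ SupportedOn (X t) (h t) ∧ IsSelfAdjoint (h t)) ∧
    (∀ i : Fin N, ∑ t ∈ Finset.univ.filter (fun t => i ∈ X t), ‖h t‖ ≤ g) ∧
    H = ∑ t, h t

/-- An additive operator `A = ∑_{i ∈ L} a_i`, each `a_i` Hermitian, supported on
the single spin `i`, with `‖a_i‖ ≤ 1`. -/
def IsAdditiveOn (L : Finset (Fin N)) (a : Fin N → SpinOp N d) (A : SpinOp N d) : Prop :=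
  (∀ i ∈ L, SupportedOn {i} (a i) ∧ IsSelfAdjoint (a i) ∧ ‖a i‖ ≤ 1) ∧
  A = ∑ i ∈ L, a i

/-- The span of all eigenvectors of `A` whose (real) eigenvalue satisfies `P`. -/
def eigSpan (A : SpinOp N d) (P : ℝ → Prop) : Submodule ℂ (SpinSpace N d) :=
  ⨆ (a : ℝ) (_ : P a), Module.End.eigenspace (A : SpinSpace N d →ₗ[ℂ] SpinSpace N d) (a : ℂ)

/-- Spectral projector of `A` onto the eigenvalues satisfying `P` (the orthogonal
projection onto the span of the corresponding eigenvectors). -/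
def specProj (A : SpinOp N d) (P : ℝ → Prop) : SpinOp N d :=
  (eigSpan A P).subtypeL.comp (Submodule.orthogonalProjectionOnto (eigSpan A P))

/-- `m` is a median of `A` in the state `ψ`. -/
def IsMedian (A : SpinOp N d) (ψ : SpinSpace N d) (m : ℝ) : Prop :=
  (1:ℝ)/2 ≤ (inner ℂ ψ ((specProj A (fun a => a ≤ m)) ψ) : ℂ).re ∧
  (1:ℝ)/2 ≤ (inner ℂ ψ ((specProj A (fun a => m ≤ a)) ψ) : ℂ).re

/-- The state `ψ` satisfies the local-reversibility bound with function `f`. -/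
def SatisfiesLR (f : ℝ → ℝ) (ψ : SpinSpace N d) : Prop :=
  ∀ (L : Finset (Fin N)) (Γ : SpinOp N d), SupportedOn L Γ →
    (inner ℂ ψ (Γ ψ) : ℂ) ≠ 0 →
    ∀ q : ℕ, 0 < q →
      ∃ R : SpinOp N d, IsLocalOp q R ∧
        ‖R (Γ ψ) - ψ‖ ≤ ‖Γ‖ / ‖(inner ℂ ψ (Γ ψ) : ℂ)‖ * f ((q : ℝ) / Real.sqrt (L.card))

/-- `H` has ground energy `0` with unique normalized ground state `Ω` and spectral
gap (at least) `δE`: `Ω` is a null state, every null state is proportional to `Ω`,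
and on the orthogonal complement of `Ω` the energy is at least `δE`. -/
def IsGappedGround (H : SpinOp N d) (Ω : SpinSpace N d) (δE : ℝ) : Prop :=
  ‖Ω‖ = 1 ∧ H Ω = 0 ∧
  (∀ φ : SpinSpace N d, H φ = 0 → ∃ c : ℂ, φ = c • Ω) ∧
  (∀ φ : SpinSpace N d, (inner ℂ Ω φ : ℂ) = 0 → δE * ‖φ‖ ^ 2 ≤ (inner ℂ φ (H φ) : ℂ).re)

/-- One-spin reduced density matrix of `ψ` on spin `i` (partial trace of
`|ψ⟩⟨ψ|` over all other spins), in the computational basis. -/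
def rdm1 (ψ : SpinSpace N d) (i : Fin N) : Matrix (Fin d) (Fin d) ℂ :=
  Matrix.of fun s s' => ∑ f : Fin N → Fin d,
    if f i = s' then ψ (Function.update f i s) * conj (ψ f) else 0

/-- Two-spin reduced density matrix of `ψ` on spins `i` and `j`. -/
def rdm2 (ψ : SpinSpace N d) (i j : Fin N) :
    Matrix (Fin d × Fin d) (Fin d × Fin d) ℂ :=
  Matrix.of fun p p' => ∑ f : Fin N → Fin d,
    if f i = p'.1 ∧ f j = p'.2 then
      ψ (Function.update (Function.update f i p.1) j p.2) * conj (ψ f) else 0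

/-- The operator norm of a (finite) square matrix, i.e. the norm of the induced
operator on the corresponding Euclidean space. -/
def matOpNorm {ι : Type*} [Fintype ι] [DecidableEq ι] (M : Matrix ι ι ℂ) : ℝ :=
  ‖Matrix.toEuclideanCLM (𝕜 := ℂ) M‖

/-!
Let `b = |s'⟩⟨s|` act on spin `i` and `a_j = |t'⟩⟨t|` on spin `j ∈ L`; the entries of
`ρ_ij - ρ_i ⊗ ρ_j` are the covariances `⟨b a_j⟩ - ⟨b⟩⟨a_j⟩`. With suitable phases `c_j`, the sum
of their moduli is `⟨Ω, b (A - ⟨A⟩) Ω⟩` for `A = ∑ c_j a_j`, hence at most the fluctuation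
`‖(A - ⟨A⟩) Ω‖`. Since `H Ω = 0`, `⟨Ω, [A†, [A, H]] Ω⟩ = -(⟨A Ω, H A Ω⟩ + ⟨A† Ω, H A† Ω⟩)`, and the
gap bounds `⟨A Ω, H A Ω⟩` below by `δE ‖(A - ⟨A⟩) Ω‖²`. By locality only the terms `h_X` of `H`
and the spins of `L ∩ X` enter the double commutator, whose norm is therefore at most
`4 k g |L|`. Summing over the `d⁴` matrix entries gives `C = d⁴ √(4 k g)`.
-/

open scoped InnerProductSpace

lemma matEntry_toEuclideanCLM (M : Matrix (Fin N → Fin d) (Fin N → Fin d) ℂ) (f g : Fin N → Fin d) :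
    matEntry (Matrix.toEuclideanCLM (𝕜 := ℂ) M) f g = M f g := by
  simp [matEntry, basisVec, EuclideanSpace.inner_single_left, Matrix.ofLp_toEuclideanCLM]

lemma matEntry_eq_toEuclideanCLM_symm (A : SpinOp N d) (f g : Fin N → Fin d) :
    matEntry A f g = (Matrix.toEuclideanCLM (𝕜 := ℂ)).symm A f g := by
  simpa using matEntry_toEuclideanCLM ((Matrix.toEuclideanCLM (𝕜 := ℂ)).symm A) f g

lemma matEntry_mul (A B : SpinOp N d) (f g : Fin N → Fin d) :
    matEntry (A * B) f g = ∑ h, matEntry A f h * matEntry B h g := by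
  rw [matEntry_eq_toEuclideanCLM_symm, map_mul, Matrix.mul_apply]
  simp only [matEntry_eq_toEuclideanCLM_symm]

lemma matEntry_star (A : SpinOp N d) (f g : Fin N → Fin d) :
    matEntry (star A) f g = conj (matEntry A g f) := by
  rw [matEntry, matEntry, ContinuousLinearMap.star_eq_adjoint,
    ContinuousLinearMap.adjoint_inner_right, inner_conj_symm]

lemma matEntry_smul (c : ℂ) (A : SpinOp N d) (f g : Fin N → Fin d) :
    matEntry (c • A) f g = c * matEntry A f g := by
  rw [matEntry, matEntry, smul_apply, inner_smul_right]

lemma ext_matEntry {A B : SpinOp N d} (h : ∀ f g, matEntry A f g = matEntry B f g) : A = B :=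
  EquivLike.injective (Matrix.toEuclideanCLM (𝕜 := ℂ)).symm <| Matrix.ext fun f g => by
    simpa only [matEntry_eq_toEuclideanCLM_symm] using h f g

namespace SupportedOn

variable {X Y : Finset (Fin N)} {A B : SpinOp N d}

lemma smul (c : ℂ) (hA : SupportedOn X A) : SupportedOn X (c • A) := by
  refine ⟨fun f g hfg => ?_, fun f g f' g' h₁ h₂ h₃ h₄ => ?_⟩
  · rw [matEntry_smul, hA.1 f g hfg, mul_zero]
  · rw [matEntry_smul, matEntry_smul, hA.2 f g f' g' h₁ h₂ h₃ h₄]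

lemma star (hA : SupportedOn X A) : SupportedOn X (star A) := by
  refine ⟨fun f g ⟨i, hi, hfg⟩ => ?_, fun f g f' g' h₁ h₂ h₃ h₄ => ?_⟩
  · rw [matEntry_star, hA.1 g f ⟨i, hi, Ne.symm hfg⟩, map_zero]
  · rw [matEntry_star, matEntry_star,
      hA.2 g f g' f' h₂ h₁ (fun i hi => (h₃ i hi).symm) (fun i hi => (h₄ i hi).symm)]

lemma sum_matEntry_mul (hA : SupportedOn X A) (hB : SupportedOn Y B) (hXY : Disjoint X Y)
    (f g : Fin N → Fin d) :
    ∑ h, matEntry A f h * matEntry B h g =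
      matEntry A f (X.piecewise g f) * matEntry B (X.piecewise g f) g := by
  refine Finset.sum_eq_single_of_mem _ (Finset.mem_univ _) fun h _ hne => ?_
  obtain ⟨i, hi⟩ := Function.ne_iff.mp hne
  by_cases hiX : i ∈ X
  · rw [Finset.piecewise_eq_of_mem _ _ _ hiX] at hi
    rw [hB.1 h g ⟨i, Finset.disjoint_left.mp hXY hiX, hi⟩, mul_zero]
  · rw [Finset.piecewise_eq_of_notMem _ _ _ hiX] at hi
    rw [hA.1 f h ⟨i, hiX, Ne.symm hi⟩, zero_mul]

lemma matEntry_piecewise (hA : SupportedOn X A) (hXY : Disjoint X Y) {f g : Fin N → Fin d}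
    (hfg : ∀ i, i ∉ X → i ∉ Y → f i = g i) :
    matEntry A f (X.piecewise g f) = matEntry A (Y.piecewise g f) g := by
  refine hA.2 _ _ _ _ (fun i hi => ?_) (fun i hi => ?_) (fun i hi => ?_) (fun i hi => ?_)
  · rw [Finset.piecewise_eq_of_notMem _ _ _ (Finset.disjoint_left.mp hXY hi)]
  · rw [Finset.piecewise_eq_of_mem _ _ _ hi]
  · rw [Finset.piecewise_eq_of_notMem _ _ _ hi]
  · by_cases hiY : i ∈ Y
    · rw [Finset.piecewise_eq_of_mem _ _ _ hiY]
    · rw [Finset.piecewise_eq_of_notMem _ _ _ hiY, hfg i hi hiY]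

theorem commute (hA : SupportedOn X A) (hB : SupportedOn Y B) (hXY : Disjoint X Y) :
    Commute A B := by
  refine ext_matEntry fun f g => ?_
  rw [matEntry_mul, matEntry_mul, hA.sum_matEntry_mul hB hXY, hB.sum_matEntry_mul hA hXY.symm]
  by_cases hfg : ∀ i, i ∉ X → i ∉ Y → f i = g i
  · rw [hA.matEntry_piecewise hXY hfg, hB.matEntry_piecewise hXY.symm fun i hY hX => hfg i hX hY,
      mul_comm]
  · push Not at hfg
    obtain ⟨i, hiX, hiY, hne⟩ := hfg
    rw [hB.1 _ g ⟨i, hiY, by rwa [Finset.piecewise_eq_of_notMem _ _ _ hiX]⟩,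
      hA.1 _ g ⟨i, hiX, by rwa [Finset.piecewise_eq_of_notMem _ _ _ hiY]⟩, mul_zero, mul_zero]

end SupportedOn

/-- The transition operator `|a⟩⟨b|` acting on spin `j`. -/
def transitionOp (j : Fin N) (a b : Fin d) : SpinOp N d :=
  LinearMap.toContinuousLinearMap
    { toFun := fun ψ => WithLp.toLp 2 fun f => if f j = a then ψ (Function.update f j b) else 0
      map_add' := fun ψ χ => by ext f; by_cases h : f j = a <;> simp [h]
      map_smul' := fun c ψ => by ext f; by_cases h : f j = a <;> simp [h] }

lemma transitionOp_apply (j : Fin N) (a b : Fin d) (ψ : SpinSpace N d) (f : Fin N → Fin d) :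
    transitionOp j a b ψ f = if f j = a then ψ (Function.update f j b) else 0 := rfl

lemma matEntry_transitionOp (j : Fin N) (a b : Fin d) (f g : Fin N → Fin d) :
    matEntry (transitionOp j a b) f g =
      if f j = a ∧ Function.update f j b = g then 1 else 0 := by
  by_cases h : f j = a <;>
    simp [h, matEntry, basisVec, EuclideanSpace.inner_single_left, transitionOp_apply]

lemma supportedOn_transitionOp (j : Fin N) (a b : Fin d) :
    SupportedOn {j} (transitionOp j a b) := by
  refine ⟨fun f g ⟨i, hi, hfg⟩ => ?_, fun f g f' g' h₁ h₂ h₃ h₄ => ?_⟩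
  · rw [matEntry_transitionOp, if_neg]
    rintro ⟨-, h⟩
    exact hfg ((Function.update_eq_iff.mp h).2 i (by simpa using hi))
  · simp only [Finset.mem_singleton, forall_eq] at h₁ h₂ h₃ h₄
    simp only [matEntry_transitionOp, Function.update_eq_iff, h₁, h₂]
    simp_all

lemma norm_transitionOp_le (j : Fin N) (a b : Fin d) : ‖transitionOp j a b‖ ≤ 1 := by
  refine ContinuousLinearMap.opNorm_le_bound _ zero_le_one fun ψ => ?_
  rw [one_mul, EuclideanSpace.norm_eq, EuclideanSpace.norm_eq]
  refine Real.sqrt_le_sqrt ?_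
  set S := Finset.univ.filter (fun f : Fin N → Fin d => f j = a)
  have hinj : Set.InjOn (Function.update · j b) (S : Set (Fin N → Fin d)) := by
    intro f hf f' hf' h
    simp only [S, Finset.coe_filter, Finset.mem_univ, true_and, Set.mem_ofPred_eq] at hf hf'
    simpa [Function.update_idem, hf.symm ▸ Function.update_eq_self j f,
      hf'.symm ▸ Function.update_eq_self j f'] using congrArg (Function.update · j a) h
  calc ∑ f, ‖transitionOp j a b ψ f‖ ^ 2
      = ∑ f ∈ S, ‖ψ (Function.update f j b)‖ ^ 2 := by
        rw [Finset.sum_filter]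
        refine Finset.sum_congr rfl fun f _ => ?_
        by_cases h : f j = a <;> simp [h, transitionOp_apply]
    _ = ∑ g ∈ S.image (Function.update · j b), ‖ψ g‖ ^ 2 := by rw [Finset.sum_image hinj]
    _ ≤ ∑ g, ‖ψ g‖ ^ 2 :=
        Finset.sum_le_sum_of_subset_of_nonneg (Finset.subset_univ _) fun _ _ _ => by positivity

lemma inner_transitionOp_eq_rdm1 (ψ : SpinSpace N d) (i : Fin N) (s s' : Fin d) :
    ⟪ψ, transitionOp i s' s ψ⟫_ℂ = rdm1 ψ i s s' := by
  rw [PiLp.inner_apply, rdm1, Matrix.of_apply]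
  refine Finset.sum_congr rfl fun f _ => ?_
  by_cases h : f i = s' <;> simp [h, transitionOp_apply, mul_comm]

lemma inner_transitionOp_transitionOp_eq_rdm2 (ψ : SpinSpace N d) {i j : Fin N} (hij : i ≠ j)
    (s s' t t' : Fin d) :
    ⟪ψ, transitionOp i s' s (transitionOp j t' t ψ)⟫_ℂ = rdm2 ψ i j (s, t) (s', t') := by
  rw [PiLp.inner_apply, rdm2, Matrix.of_apply]
  refine Finset.sum_congr rfl fun f _ => ?_
  by_cases hi : f i = s' <;> by_cases hj : f j = t' <;>
    simp [hi, hj, transitionOp_apply, Function.update_of_ne hij.symm, mul_comm]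

lemma rdm2_sub_kronecker_apply (ψ : SpinSpace N d) {i j : Fin N} (hij : i ≠ j)
    (q q' : Fin d × Fin d) :
    (rdm2 ψ i j - Matrix.kroneckerMap (· * ·) (rdm1 ψ i) (rdm1 ψ j)) q q' =
      ⟪ψ, transitionOp i q'.1 q.1 (transitionOp j q'.2 q.2 ψ)⟫_ℂ -
        ⟪ψ, transitionOp i q'.1 q.1 ψ⟫_ℂ * ⟪ψ, transitionOp j q'.2 q.2 ψ⟫_ℂ := by
  rw [inner_transitionOp_transitionOp_eq_rdm2 ψ hij, inner_transitionOp_eq_rdm1,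
    inner_transitionOp_eq_rdm1]
  rfl

lemma EuclideanSpace.norm_le_sum_norm {𝕜 ι : Type*} [RCLike 𝕜] [Fintype ι]
    (y : EuclideanSpace 𝕜 ι) : ‖y‖ ≤ ∑ i, ‖y i‖ := by
  classical
  conv_lhs => rw [← (EuclideanSpace.basisFun ι 𝕜).sum_repr y]
  refine (norm_sum_le _ _).trans_eq (Finset.sum_congr rfl fun i _ => ?_)
  simp [norm_smul]

lemma matOpNorm_le_sum_norm {ι : Type*} [Fintype ι] [DecidableEq ι] (M : Matrix ι ι ℂ) :
    matOpNorm M ≤ ∑ q, ∑ r, ‖M q r‖ := by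
  refine ContinuousLinearMap.opNorm_le_bound _ (by positivity) fun x => ?_
  calc ‖Matrix.toEuclideanCLM (𝕜 := ℂ) M x‖
      ≤ ∑ q, ‖Matrix.toEuclideanCLM (𝕜 := ℂ) M x q‖ := EuclideanSpace.norm_le_sum_norm _
    _ ≤ ∑ q, ∑ r, ‖M q r‖ * ‖x‖ := by
        refine Finset.sum_le_sum fun q _ => ?_
        rw [Matrix.ofLp_toEuclideanCLM, Matrix.mulVec, dotProduct]
        refine (norm_sum_le _ _).trans (Finset.sum_le_sum fun r _ => ?_)
        rw [norm_mul]
        exact mul_le_mul_of_nonneg_left (PiLp.norm_apply_le x r) (norm_nonneg _)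
    _ = (∑ q, ∑ r, ‖M q r‖) * ‖x‖ := by simp only [Finset.sum_mul]

lemma norm_lie_le {R : Type*} [NonUnitalNormedRing R] (x y : R) : ‖⁅x, y⁆‖ ≤ 2 * ‖x‖ * ‖y‖ := by
  rw [Ring.lie_def]
  calc ‖x * y - y * x‖ ≤ ‖x‖ * ‖y‖ + ‖y‖ * ‖x‖ :=
        (norm_sub_le _ _).trans (add_le_add (norm_mul_le _ _) (norm_mul_le _ _))
    _ = 2 * ‖x‖ * ‖y‖ := by ring

lemma Ring.sum_lie {R ι : Type*} [Ring R] (s : Finset ι) (a : ι → R) (x : R) :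
    ⁅∑ j ∈ s, a j, x⁆ = ∑ j ∈ s, ⁅a j, x⁆ := by
  simp only [Ring.lie_def, Finset.sum_mul, Finset.mul_sum, Finset.sum_sub_distrib]

lemma Ring.lie_sum {R ι : Type*} [Ring R] (s : Finset ι) (a : ι → R) (x : R) :
    ⁅x, ∑ j ∈ s, a j⁆ = ∑ j ∈ s, ⁅x, a j⁆ := by
  simp only [Ring.lie_def, Finset.sum_mul, Finset.mul_sum, Finset.sum_sub_distrib]

lemma sum_lie_eq_sum_inter {R ι : Type*} [Ring R] [DecidableEq ι] {s S : Finset ι} {a : ι → R}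
    {x : R} (h : ∀ j ∈ s, j ∉ S → Commute (a j) x) :
    ⁅∑ j ∈ s, a j, x⁆ = ∑ j ∈ s ∩ S, ⁅a j, x⁆ := by
  rw [Ring.sum_lie, ← Finset.sum_filter_add_sum_filter_not s (· ∈ S), Finset.filter_mem_eq_inter,
    Finset.sum_eq_zero (s := s.filter (· ∉ S)), add_zero]
  intro j hj
  rw [Finset.mem_filter] at hj
  exact commute_iff_lie_eq.mp (h j hj.1 hj.2)

lemma sum_card_inter_mul_le {ι κ : Type*} [Fintype ι] [DecidableEq κ] (X : ι → Finset κ)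
    (L : Finset κ) (w : ι → ℝ) {g : ℝ}
    (hw : ∀ j ∈ L, ∑ t ∈ Finset.univ.filter (fun t => j ∈ X t), w t ≤ g) :
    ∑ t, ((L ∩ X t).card : ℝ) * w t ≤ g * L.card := by
  calc ∑ t, ((L ∩ X t).card : ℝ) * w t
      = ∑ j ∈ L, ∑ t ∈ Finset.univ.filter (fun t => j ∈ X t), w t := by
        simp only [Finset.sum_filter, ← Finset.filter_mem_eq_inter, Finset.card_filter,
          Nat.cast_sum, Finset.sum_mul]
        rw [Finset.sum_comm]
        refine Finset.sum_congr rfl fun j _ => Finset.sum_congr rfl fun t _ => ?_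
        split_ifs <;> simp
    _ ≤ ∑ _j ∈ L, g := Finset.sum_le_sum hw
    _ = g * L.card := by rw [Finset.sum_const, nsmul_eq_mul, mul_comm]

lemma IsKLocalHamiltonian.isSelfAdjoint {k : ℕ} {g : ℝ} {H : SpinOp N d}
    (hH : IsKLocalHamiltonian k g H) : IsSelfAdjoint H := by
  obtain ⟨n, X, h, hloc, -, rfl⟩ := hH
  exact isSelfAdjoint_sum (R := SpinOp N d) _ fun t _ => (hloc t).2.2

lemma lie_lie_sum_eq_sum_inter {n : ℕ} {X : Fin n → Finset (Fin N)} {h : Fin n → SpinOp N d}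
    (hh : ∀ t, SupportedOn (X t) (h t)) {L : Finset (Fin N)} {a b : Fin N → SpinOp N d}
    (ha : ∀ j ∈ L, SupportedOn {j} (a j)) (hb : ∀ j ∈ L, SupportedOn {j} (b j)) :
    ⁅∑ j ∈ L, b j, ⁅∑ j ∈ L, a j, ∑ t, h t⁆⁆ =
      ∑ t, ∑ j ∈ L ∩ X t, ∑ j' ∈ L ∩ X t, ⁅b j', ⁅a j, h t⁆⁆ := by
  have hdisj : ∀ t j, j ∉ X t → Disjoint {j} (X t) := fun t j hj =>
    Finset.disjoint_singleton_left.mpr hj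
  have hinner : ∀ t, ⁅∑ j ∈ L, a j, h t⁆ = ∑ j ∈ L ∩ X t, ⁅a j, h t⁆ := fun t =>
    sum_lie_eq_sum_inter fun j hj hjt => (ha j hj).commute (hh t) (hdisj t j hjt)
  have houter : ∀ t, ∀ j ∈ L ∩ X t,
      ⁅∑ j' ∈ L, b j', ⁅a j, h t⁆⁆ = ∑ j' ∈ L ∩ X t, ⁅b j', ⁅a j, h t⁆⁆ := by
    intro t j hj
    refine sum_lie_eq_sum_inter fun j' hj' hj't => ?_
    have hbh := (hb j' hj').commute (hh t) (hdisj t j' hj't)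
    have hba := (hb j' hj').commute (ha j (Finset.mem_inter.mp hj).1)
      (Finset.disjoint_singleton.mpr fun hjj => hj't (hjj ▸ (Finset.mem_inter.mp hj).2))
    rw [Ring.lie_def]
    exact (hba.mul_right hbh).sub_right (hbh.mul_right hba)
  simp only [Ring.lie_sum, hinner, Finset.sum_congr rfl (houter _)]

theorem IsKLocalHamiltonian.norm_lie_lie_le {k : ℕ} {g : ℝ} {H : SpinOp N d}
    (hH : IsKLocalHamiltonian k g H) {L : Finset (Fin N)} {a b : Fin N → SpinOp N d}
    (ha : ∀ j ∈ L, SupportedOn {j} (a j) ∧ ‖a j‖ ≤ 1)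
    (hb : ∀ j ∈ L, SupportedOn {j} (b j) ∧ ‖b j‖ ≤ 1) :
    ‖⁅∑ j ∈ L, b j, ⁅∑ j ∈ L, a j, H⁆⁆‖ ≤ 4 * k * g * L.card := by
  obtain ⟨n, X, h, hloc, hstr, rfl⟩ := hH
  have hterm : ∀ t, ∀ j ∈ L ∩ X t, ∀ j' ∈ L ∩ X t, ‖⁅b j', ⁅a j, h t⁆⁆‖ ≤ 4 * ‖h t‖ := by
    intro t j hj j' hj'
    have ha1 := (ha j (Finset.mem_inter.mp hj).1).2
    have hb1 := (hb j' (Finset.mem_inter.mp hj').1).2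
    calc ‖⁅b j', ⁅a j, h t⁆⁆‖ ≤ 2 * ‖b j'‖ * (2 * ‖a j‖ * ‖h t‖) :=
          (norm_lie_le _ _).trans (by gcongr; exact norm_lie_le _ _)
      _ ≤ 2 * 1 * (2 * 1 * ‖h t‖) := by gcongr
      _ = 4 * ‖h t‖ := by ring
  have hcard : ∀ t, (L ∩ X t).card ≤ k := fun t =>
    (Finset.card_le_card Finset.inter_subset_right).trans (hloc t).1
  rw [lie_lie_sum_eq_sum_inter (fun t => (hloc t).2.1) (fun j hj => (ha j hj).1)
    (fun j hj => (hb j hj).1)]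
  calc ‖∑ t, ∑ j ∈ L ∩ X t, ∑ j' ∈ L ∩ X t, ⁅b j', ⁅a j, h t⁆⁆‖
      ≤ ∑ t, ∑ j ∈ L ∩ X t, ∑ j' ∈ L ∩ X t, 4 * ‖h t‖ := by
        refine (norm_sum_le _ _).trans (Finset.sum_le_sum fun t _ => ?_)
        refine (norm_sum_le _ _).trans (Finset.sum_le_sum fun j hj => ?_)
        exact (norm_sum_le _ _).trans (Finset.sum_le_sum fun j' hj' => hterm t j hj j' hj')
    _ = ∑ t, ((L ∩ X t).card : ℝ) * ((L ∩ X t).card * (4 * ‖h t‖)) := by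
        simp only [Finset.sum_const, nsmul_eq_mul]
    _ ≤ ∑ t, (k : ℝ) * ((L ∩ X t).card * (4 * ‖h t‖)) := by
        gcongr with t
        exact hcard t
    _ = 4 * k * ∑ t, ((L ∩ X t).card : ℝ) * ‖h t‖ := by
        rw [Finset.mul_sum]
        exact Finset.sum_congr rfl fun t _ => by ring
    _ ≤ 4 * k * (g * L.card) := by
        gcongr
        exact sum_card_inter_mul_le X L _ fun j _ => hstr j
    _ = 4 * k * g * L.card := by ring

lemma IsSelfAdjoint.inner_apply_eq_zero {E : Type*} [NormedAddCommGroup E]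
    [InnerProductSpace ℂ E] [CompleteSpace E] {H : E →L[ℂ] E} (hH : IsSelfAdjoint H) {Ω : E}
    (hΩ : H Ω = 0) (v : E) : ⟪Ω, H v⟫_ℂ = 0 := by
  rw [← hH.adjoint_eq, ContinuousLinearMap.adjoint_inner_right, hΩ, inner_zero_left]

lemma inner_lie_lie_eq {E : Type*} [NormedAddCommGroup E] [InnerProductSpace ℂ E] [CompleteSpace E]
    {H : E →L[ℂ] E} (hH : IsSelfAdjoint H) {Ω : E} (hΩ : H Ω = 0) (A : E →L[ℂ] E) :
    ⟪Ω, ⁅star A, ⁅A, H⁆⁆ Ω⟫_ℂ = -(⟪A Ω, H (A Ω)⟫_ℂ + ⟪star A Ω, H (star A Ω)⟫_ℂ) := by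
  simp only [Ring.lie_def, sub_apply, mul_apply_eq_comp, inner_sub_right, hΩ, map_zero,
    inner_zero_right, hH.inner_apply_eq_zero hΩ,
    ContinuousLinearMap.star_eq_adjoint, ← ContinuousLinearMap.adjoint_inner_left,
    ContinuousLinearMap.adjoint_adjoint]
  ring

lemma IsGappedGround.mul_norm_sq_le_re_inner {H : SpinOp N d} {Ω : SpinSpace N d} {δE : ℝ}
    (hG : IsGappedGround H Ω δE) (hH : IsSelfAdjoint H) (v : SpinSpace N d) :
    δE * ‖v - ⟪Ω, v⟫_ℂ • Ω‖ ^ 2 ≤ (⟪v, H v⟫_ℂ).re := by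
  obtain ⟨hΩ, hHΩ, -, hgap⟩ := hG
  have hΩΩ : ⟪Ω, Ω⟫_ℂ = 1 := by rw [inner_self_eq_norm_sq_to_K, hΩ]; norm_num
  have hperp : ⟪Ω, v - ⟪Ω, v⟫_ℂ • Ω⟫_ℂ = 0 := by
    rw [inner_sub_right, inner_smul_right, hΩΩ, mul_one, sub_self]
  convert hgap _ hperp using 2
  rw [map_sub, map_smul, hHΩ, smul_zero, sub_zero, inner_sub_left, inner_smul_left,
    hH.inner_apply_eq_zero hHΩ, mul_zero, sub_zero]

theorem IsGappedGround.mul_norm_sq_le_norm_lie_lie {H : SpinOp N d} {Ω : SpinSpace N d}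
    {δE : ℝ} (hG : IsGappedGround H Ω δE) (hH : IsSelfAdjoint H) (hδE : 0 ≤ δE)
    (A : SpinOp N d) :
    δE * ‖A Ω - ⟪Ω, A Ω⟫_ℂ • Ω‖ ^ 2 ≤ ‖⁅star A, ⁅A, H⁆⁆‖ := by
  have hA := hG.mul_norm_sq_le_re_inner hH (A Ω)
  have hA' := hG.mul_norm_sq_le_re_inner hH (star A Ω)
  have hre : (⟪A Ω, H (A Ω)⟫_ℂ).re + (⟪star A Ω, H (star A Ω)⟫_ℂ).re ≤ ‖⁅star A, ⁅A, H⁆⁆‖ := by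
    calc _ = -(⟪Ω, ⁅star A, ⁅A, H⁆⁆ Ω⟫_ℂ).re := by
          rw [inner_lie_lie_eq hH hG.2.1, Complex.neg_re, Complex.add_re, neg_neg]
      _ ≤ ‖⟪Ω, ⁅star A, ⁅A, H⁆⁆ Ω⟫_ℂ‖ := (neg_le_abs _).trans (Complex.abs_re_le_norm _)
      _ ≤ ‖Ω‖ * (‖⁅star A, ⁅A, H⁆⁆‖ * ‖Ω‖) :=
          (norm_inner_le_norm _ _).trans (by gcongr; exact ContinuousLinearMap.le_opNorm _ Ω)
      _ = ‖⁅star A, ⁅A, H⁆⁆‖ := by rw [hG.1, mul_one, one_mul]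
  nlinarith [mul_nonneg hδE (sq_nonneg ‖star A Ω - ⟪Ω, star A Ω⟫_ℂ • Ω‖)]

theorem sum_norm_inner_sub_le {E ι : Type*} [NormedAddCommGroup E] [InnerProductSpace ℂ E]
    (Ω : E) (b : E →L[ℂ] E) (a : ι → E →L[ℂ] E) (s : Finset ι) {M : ℝ}
    (hM : ∀ c : ι → ℂ, (∀ j, ‖c j‖ ≤ 1) →
      ‖(∑ j ∈ s, c j • a j) Ω - ⟪Ω, (∑ j ∈ s, c j • a j) Ω⟫_ℂ • Ω‖ ≤ M) :
    ∑ j ∈ s, ‖⟪Ω, b (a j Ω)⟫_ℂ - ⟪Ω, b Ω⟫_ℂ * ⟪Ω, a j Ω⟫_ℂ‖ ≤ ‖Ω‖ * ‖b‖ * M := by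
  set z : ι → ℂ := fun j => ⟪Ω, b (a j Ω)⟫_ℂ - ⟪Ω, b Ω⟫_ℂ * ⟪Ω, a j Ω⟫_ℂ
  set c : ι → ℂ := fun j => conj (z j) / ‖z j‖
  have hc : ∀ j, ‖c j‖ ≤ 1 := fun j => by
    simp only [c, norm_div, Complex.norm_conj, Complex.norm_real, norm_norm]
    exact div_self_le_one _
  have hcz : ∀ j, c j * z j = ‖z j‖ := fun j => by
    rcases eq_or_ne (z j) 0 with h | h
    · simp [h]
    · rw [div_mul_eq_mul_div, Complex.conj_mul', pow_two, mul_div_assoc,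
        div_self (Complex.ofReal_ne_zero.mpr (norm_ne_zero_iff.mpr h)), mul_one]
  set A := ∑ j ∈ s, c j • a j
  have hsum : ((∑ j ∈ s, ‖z j‖ : ℝ) : ℂ) = ⟪Ω, b (A Ω - ⟪Ω, A Ω⟫_ℂ • Ω)⟫_ℂ := by
    simp only [A, map_sub, map_smul, inner_sub_right, inner_smul_right, sum_apply,
      smul_apply, map_sum, inner_sum, Complex.ofReal_sum, ← hcz, z, Finset.sum_mul,
      ← Finset.sum_sub_distrib]
    exact Finset.sum_congr rfl fun j _ => by ring
  calc ∑ j ∈ s, ‖z j‖ = ‖((∑ j ∈ s, ‖z j‖ : ℝ) : ℂ)‖ := by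
        rw [Complex.norm_real, Real.norm_of_nonneg (by positivity)]
    _ ≤ ‖Ω‖ * (‖b‖ * ‖A Ω - ⟪Ω, A Ω⟫_ℂ • Ω‖) := by
        rw [hsum]
        exact (norm_inner_le_norm _ _).trans (by gcongr; exact b.le_opNorm _)
    _ ≤ ‖Ω‖ * ‖b‖ * M := by rw [← mul_assoc]; gcongr; exact hM c hc

lemma sum_norm_rdm2_sub_kronecker_apply_le {k : ℕ} {g δE : ℝ} {H : SpinOp N d}
    {Ω : SpinSpace N d} (hH : IsKLocalHamiltonian k g H) (hG : IsGappedGround H Ω δE)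
    (hδE : 0 < δE) {L : Finset (Fin N)} {i : Fin N} (hi : i ∉ L) (q q' : Fin d × Fin d) :
    ∑ j ∈ L, ‖(rdm2 Ω i j - Matrix.kroneckerMap (· * ·) (rdm1 Ω i) (rdm1 Ω j)) q q'‖ ≤
      Real.sqrt (4 * k * g * L.card / δE) := by
  have hM : ∀ c : Fin N → ℂ, (∀ j, ‖c j‖ ≤ 1) →
      ‖(∑ j ∈ L, c j • transitionOp j q'.2 q.2) Ω -
        ⟪Ω, (∑ j ∈ L, c j • transitionOp j q'.2 q.2) Ω⟫_ℂ • Ω‖ ≤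
      Real.sqrt (4 * k * g * L.card / δE) := by
    intro c hc
    have ha : ∀ j ∈ L, SupportedOn {j} (c j • transitionOp j q'.2 q.2) ∧
        ‖c j • transitionOp j q'.2 q.2‖ ≤ 1 := fun j _ => by
      refine ⟨(supportedOn_transitionOp j _ _).smul _, ?_⟩
      rw [norm_smul]
      exact mul_le_one₀ (hc j) (norm_nonneg _) (norm_transitionOp_le j _ _)
    have hstar : ∀ j ∈ L, SupportedOn {j} (star (c j • transitionOp j q'.2 q.2)) ∧
        ‖star (c j • transitionOp j q'.2 q.2)‖ ≤ 1 := fun j hj =>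
      ⟨(ha j hj).1.star, by
        rw [ContinuousLinearMap.star_eq_adjoint, LinearIsometryEquiv.norm_map]; exact (ha j hj).2⟩
    have hlie := hH.norm_lie_lie_le ha hstar
    rw [← star_sum (R := SpinOp N d)] at hlie
    refine Real.le_sqrt_of_sq_le ?_
    rw [le_div_iff₀ hδE, mul_comm]
    exact (hG.mul_norm_sq_le_norm_lie_lie hH.isSelfAdjoint hδE.le _).trans hlie
  calc _ = ∑ j ∈ L, ‖⟪Ω, transitionOp i q'.1 q.1 (transitionOp j q'.2 q.2 Ω)⟫_ℂ -
        ⟪Ω, transitionOp i q'.1 q.1 Ω⟫_ℂ * ⟪Ω, transitionOp j q'.2 q.2 Ω⟫_ℂ‖ :=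
        Finset.sum_congr rfl fun j hj => by
          rw [rdm2_sub_kronecker_apply Ω (ne_of_mem_of_not_mem hj hi).symm]
    _ ≤ ‖Ω‖ * ‖transitionOp i q'.1 q.1‖ * Real.sqrt (4 * k * g * L.card / δE) :=
        sum_norm_inner_sub_le _ _ _ _ hM
    _ ≤ Real.sqrt (4 * k * g * L.card / δE) := by
        rw [hG.1, one_mul]
        exact mul_le_of_le_one_left (Real.sqrt_nonneg _) (norm_transitionOp_le i _ _)

theorem mean_field_pairwise_error_general
    (g : ℝ) (k d : ℕ) :
    ∃ C : ℝ, ∀ (N : ℕ) (H : SpinOp N d) (δE : ℝ),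
      IsKLocalHamiltonian k g H → 0 < δE →
      ∀ Ω : SpinSpace N d, IsGappedGround H Ω δE →
      ∀ L : Finset (Fin N), δE ≤ g * L.card →
      ∀ i : Fin N, i ∉ L →
        ∑ j ∈ L,
          matOpNorm (rdm2 Ω i j -
            Matrix.kroneckerMap (· * ·) (rdm1 Ω i) (rdm1 Ω j)) ≤
          C * Real.sqrt (L.card / δE) := by
  refine ⟨d ^ 4 * Real.sqrt (4 * k * g), fun N H δE hH hδE Ω hG L _ i hi => ?_⟩
  calc _ ≤ ∑ j ∈ L, ∑ q, ∑ q',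
        ‖(rdm2 Ω i j - Matrix.kroneckerMap (· * ·) (rdm1 Ω i) (rdm1 Ω j)) q q'‖ :=
        Finset.sum_le_sum fun j _ => matOpNorm_le_sum_norm _
    _ = ∑ q, ∑ q', ∑ j ∈ L,
        ‖(rdm2 Ω i j - Matrix.kroneckerMap (· * ·) (rdm1 Ω i) (rdm1 Ω j)) q q'‖ := by
        rw [Finset.sum_comm]
        exact Finset.sum_congr rfl fun q _ => Finset.sum_comm
    _ ≤ ∑ _q : Fin d × Fin d, ∑ _q' : Fin d × Fin d, Real.sqrt (4 * k * g * L.card / δE) := by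
        gcongr with q _ q' _
        exact sum_norm_rdm2_sub_kronecker_apply_le hH hG hδE hi q q'
    _ = d ^ 4 * Real.sqrt (4 * k * g * (L.card / δE)) := by
        simp only [Finset.sum_const, Finset.card_univ, Fintype.card_prod, Fintype.card_fin,
          nsmul_eq_mul, mul_div_assoc]
        push_cast
        ring
    _ = d ^ 4 * Real.sqrt (4 * k * g) * Real.sqrt (L.card / δE) := by
        rw [Real.sqrt_mul' (4 * k * g) (by positivity)]
        ring

theorem mean_field_pairwise_error
    (g : ℝ) (k d : ℕ) (hg : 0 < g) (hk : 0 < k) (hd : 0 < d) :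
    ∃ C : ℝ, ∀ (N : ℕ) (H : SpinOp N d) (δE : ℝ),
      IsKLocalHamiltonian k g H → 0 < δE →
      ∀ Ω : SpinSpace N d, IsGappedGround H Ω δE →
      ∀ L : Finset (Fin N), δE ≤ g * L.card →
      ∀ i : Fin N, i ∉ L →
        ∑ j ∈ L,
          matOpNorm (rdm2 Ω i j -
            Matrix.kroneckerMap (· * ·) (rdm1 Ω i) (rdm1 Ω j)) ≤
          C * Real.sqrt (L.card / δE) :=
  mean_field_pairwise_error_general g k d
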